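/- Let C' be an n×n diagonal matrix with non-positive diagonal entries c'_i ≤ 0, and let p, q be two probability vectors of length n. Then the minimum of ⟨C', π⟩ over all couplings π (nonnegative n×n matrices with row sums p and column sums q) equals ∑_i min(p_i, q_i) · c'_i. -/

import Mathlib

/-!
A coupling puts at most `min (p i) (q i)` mass on the diagonal entry `(i, i)`, so with
non-positive diagonal costs every coupling costs at least `∑ i, min (p i) (q i) * c i`.
This value is attained by the coupling that places `m i = min (p i) (q i)` on the diagonal
and transports the residual marginals `p - m`, `q - m` independently: for each `i` one of
`p i - m i`, `q i - m i` vanishes, so the independent part contributes nothing on the diagonal.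
-/

open Finset

section Coupling

variable {ι : Type*} [Fintype ι]

def IsCoupling (p q : ι → ℝ) (π : ι → ι → ℝ) : Prop :=
  (∀ i j, 0 ≤ π i j) ∧ (∀ i, ∑ j, π i j = p i) ∧ (∀ j, ∑ i, π i j = q j)

theorem IsCoupling.add {p q p' q' : ι → ℝ} {π π' : ι → ι → ℝ}
    (h : IsCoupling p q π) (h' : IsCoupling p' q' π') :
    IsCoupling (p + p') (q + q') (π + π') := by
  obtain ⟨hπ, hrow, hcol⟩ := h
  obtain ⟨hπ', hrow', hcol'⟩ := h'
  refine ⟨fun i j => add_nonneg (hπ i j) (hπ' i j), fun i => ?_, fun j => ?_⟩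
  · simp only [Pi.add_apply, sum_add_distrib, hrow, hrow']
  · simp only [Pi.add_apply, sum_add_distrib, hcol, hcol']

theorem isCoupling_diagonal [DecidableEq ι] {m : ι → ℝ} (hm : 0 ≤ m) :
    IsCoupling m m (fun i j => if i = j then m i else 0) := by
  refine ⟨fun i j => ?_, fun i => by simp, fun j => by simp⟩
  dsimp only
  split_ifs
  exacts [hm i, le_rfl]

/-- When the total mass is `0`, division by zero makes this the zero matrix, which is then the
right coupling since `a = b = 0`. -/
theorem isCoupling_mul_div_sum {a b : ι → ℝ} (ha : 0 ≤ a) (hb : 0 ≤ b)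
    (hab : ∑ i, a i = ∑ i, b i) :
    IsCoupling a b (fun i j => a i * b j / ∑ k, a k) := by
  have ha_zero (h : ∑ k, a k = 0) (i : ι) : a i = 0 :=
    (sum_eq_zero_iff_of_nonneg fun k _ => ha k).mp h i (mem_univ i)
  have hb_zero (h : ∑ k, a k = 0) (j : ι) : b j = 0 :=
    (sum_eq_zero_iff_of_nonneg fun k _ => hb k).mp (hab ▸ h) j (mem_univ j)
  refine ⟨fun i j => div_nonneg (mul_nonneg (ha i) (hb j)) (sum_nonneg fun k _ => ha k),
    fun i => ?_, fun j => ?_⟩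
  · rw [← sum_div, ← mul_sum, ← hab]
    by_cases h : ∑ k, a k = 0
    · simp [h, ha_zero h i]
    · field_simp
  · rw [← sum_div, ← sum_mul]
    by_cases h : ∑ k, a k = 0
    · simp [h, hb_zero h j]
    · field_simp

theorem IsCoupling.diag_le_min {p q : ι → ℝ} {π : ι → ι → ℝ} (h : IsCoupling p q π) (i : ι) :
    π i i ≤ min (p i) (q i) := by
  obtain ⟨hπ, hrow, hcol⟩ := h
  refine le_min ?_ ?_
  · exact hrow i ▸ single_le_sum (fun j _ => hπ i j) (mem_univ i)
  · exact hcol i ▸ single_le_sum (fun j _ => hπ j i) (mem_univ i)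

theorem sum_sum_ite_mul_eq_sum_mul_diag [DecidableEq ι] (c : ι → ℝ) (π : ι → ι → ℝ) :
    ∑ i, ∑ j, (if i = j then c i else 0) * π i j = ∑ i, c i * π i i := by
  simp [ite_mul]

end Coupling

theorem sub_min_mul_sub_min_eq_zero {α : Type*} [Ring α] [LinearOrder α] (a b : α) :
    (a - min a b) * (b - min a b) = 0 := by
  rcases min_cases a b with ⟨h, -⟩ | ⟨h, -⟩ <;> simp [h]

/-- For a diagonal cost matrix with non-positive diagonal entries `c i ≤ 0`,
the minimum transport cost over all couplings of probability vectors `p, q` equals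
`∑ i, min (p i) (q i) * c i`. -/
theorem diagonal_negative_cost_ot {n : ℕ} (p q : Fin n → ℝ)
    (hp : ∀ i, 0 ≤ p i) (hp1 : ∑ i, p i = 1)
    (hq : ∀ i, 0 ≤ q i) (hq1 : ∑ i, q i = 1)
    (c : Fin n → ℝ) (hc : ∀ i, c i ≤ 0) :
    IsLeast
      {x : ℝ | ∃ π : Fin n → Fin n → ℝ,
        (∀ i j, 0 ≤ π i j) ∧ (∀ i, ∑ j, π i j = p i) ∧ (∀ j, ∑ i, π i j = q j) ∧
        x = ∑ i, ∑ j, (if i = j then c i else 0) * π i j}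
      (∑ i, min (p i) (q i) * c i) := by
  set m : Fin n → ℝ := fun i => min (p i) (q i)
  constructor
  · have hmp : m ≤ p := fun i => min_le_left (p i) (q i)
    have hmq : m ≤ q := fun i => min_le_right (p i) (q i)
    have hres : ∑ i, (p - m) i = ∑ i, (q - m) i := by
      simp only [Pi.sub_apply, sum_sub_distrib, hp1, hq1]
    have hcoupling := (isCoupling_diagonal fun i => le_min (hp i) (hq i)).add
      (isCoupling_mul_div_sum (sub_nonneg.2 hmp) (sub_nonneg.2 hmq) hres)
    rw [add_sub_cancel, add_sub_cancel] at hcoupling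
    refine ⟨_, hcoupling.1, hcoupling.2.1, hcoupling.2.2, ?_⟩
    rw [sum_sum_ite_mul_eq_sum_mul_diag]
    simp [m, sub_min_mul_sub_min_eq_zero, mul_comm]
  · rintro x ⟨π, hπ, hrow, hcol, rfl⟩
    rw [sum_sum_ite_mul_eq_sum_mul_diag]
    exact sum_le_sum fun i _ => mul_comm (c i) _ ▸
      mul_le_mul_of_nonpos_left (IsCoupling.diag_le_min ⟨hπ, hrow, hcol⟩ i) (hc i)
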